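/- (Våge's inequality for the Kondratiev space of stochastic distributions) Let p, q ∈ ℕ with p ≥ q + 2. Then S := ∑_{α ∈ ℕ →₀ ℕ} (2ℕ)^{−(p−q)α} < ∞, and for all f, g : (ℕ →₀ ℕ) → ℂ with ∑_α |f_α|² (2ℕ)^{−qα} < ∞ and ∑_β |g_β|² (2ℕ)^{−pβ} < ∞, the Wick product f ⋄ g satisfies ∑_γ |∑_{α+β=γ} f_α g_β|² (2ℕ)^{−pγ} ≤ S · (∑_α |f_α|² (2ℕ)^{−qα}) · (∑_β |g_β|² (2ℕ)^{−pβ}). -/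

import Mathlib

/-!
The weight `(2ℕ)^α` is multiplicative in `α`, so `∑_α (2ℕ)^{-rα}` is the Euler product
`∏_k (1 - (2(k+1))^{-r})⁻¹`, which converges because `∑_k (2(k+1))^{-r} < ∞` for `r ≥ 2`.
For the inequality, Cauchy–Schwarz on each antidiagonal `α + β = γ`, with the weights
`(2ℕ)^{-(p-q)α}`, gives
`|(f ⋄ g)_γ|² (2ℕ)^{-pγ} ≤ S · ∑_{α+β=γ} |f_α|² (2ℕ)^{-qα} · |g_β|² (2ℕ)^{-pβ}`,
and summing over `γ` turns the right-hand side into a Cauchy product.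
-/

open scoped ENNReal

/-- The weight `(2ℕ)^α = ∏_{k ∈ supp α} (2(k+1))^(α k)` on the free commutative
monoid `ℕ →₀ ℕ`. -/
noncomputable def twoNpow (α : ℕ →₀ ℕ) : ℝ :=
  ∏ k ∈ α.support, ((2 * ((k : ℝ) + 1)) ^ (α k))

/-- The convolution (Wick product) of two families indexed by `ℕ →₀ ℕ`. -/
noncomputable def wick (f g : (ℕ →₀ ℕ) → ℂ) : (ℕ →₀ ℕ) → ℂ :=
  fun γ => ∑ x ∈ Finset.HasAntidiagonal.antidiagonal γ, f x.1 * g x.2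

open Finset Finset.HasAntidiagonal

lemma twoNpow_add (α β : ℕ →₀ ℕ) : twoNpow (α + β) = twoNpow α * twoNpow β :=
  Finsupp.prod_add_index' (fun _ => pow_zero _) (fun _ _ _ => pow_add _ _ _)

lemma twoNpow_pos (α : ℕ →₀ ℕ) : 0 < twoNpow α :=
  prod_pos fun _ _ => by positivity

lemma ofReal_one_div_twoNpow_pow (r : ℕ) (α : ℕ →₀ ℕ) :
    ENNReal.ofReal (1 / twoNpow α ^ r)
      = α.prod fun k n => ENNReal.ofReal ((2 * ((k : ℝ) + 1)) ^ r)⁻¹ ^ n := by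
  rw [twoNpow, one_div, ← prod_pow, ← prod_inv_distrib,
    ENNReal.ofReal_prod_of_nonneg fun k _ => by positivity]
  refine prod_congr rfl fun k _ => ?_
  rw [← pow_mul, mul_comm (α k) r, pow_mul, ← inv_pow, ENNReal.ofReal_pow (by positivity)]

lemma sum_finsupp_prod_pow_le (c : ℕ → ℝ≥0∞) (s : Finset (ℕ →₀ ℕ)) :
    ∃ N, ∑ α ∈ s, α.prod (fun k n => c k ^ n) ≤ ∏ k ∈ range N, ∑' n, c k ^ n := by
  classical
  set β := s.sup id
  have hle : ∀ α ∈ s, α ≤ β := fun α hα => le_sup (f := id) hα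
  obtain ⟨N, hN⟩ := exists_nat_subset_range β.support
  have hsupp : ∀ α ∈ s, α.support ⊆ range N := fun α hα =>
    (Finsupp.support_mono (hle α hα)).trans hN
  let restrict : (ℕ →₀ ℕ) → Fin N → ℕ := fun α i => α i
  have hinj : Set.InjOn restrict s := by
    intro α hα α' hα' h
    ext k
    by_cases hk : k < N
    · exact congrFun h ⟨k, hk⟩
    · have hk' : k ∉ range N := by simpa using hk
      rw [Finsupp.notMem_support_iff.1 (fun h => hk' (hsupp α hα h)),
        Finsupp.notMem_support_iff.1 (fun h => hk' (hsupp α' hα' h))]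
  have himage : s.image restrict ⊆ Fintype.piFinset fun i : Fin N => range (β i + 1) := by
    simp only [image_subset_iff, Fintype.mem_piFinset, mem_range, Nat.lt_succ_iff]
    exact fun α hα i => hle α hα i
  refine ⟨N, ?_⟩
  calc ∑ α ∈ s, α.prod (fun k n => c k ^ n)
      = ∑ α ∈ s, ∏ i : Fin N, c i ^ restrict α i := sum_congr rfl fun α hα => by
        rw [Finsupp.prod_of_support_subset _ (hsupp α hα) _ fun _ _ => pow_zero _,
          ← Fin.prod_univ_eq_prod_range]
    _ = ∑ v ∈ s.image restrict, ∏ i : Fin N, c i ^ v i :=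
        (sum_image (f := fun v : Fin N → ℕ => ∏ i : Fin N, c i ^ v i) hinj).symm
    _ ≤ ∑ v ∈ Fintype.piFinset fun i : Fin N => range (β i + 1), ∏ i : Fin N, c i ^ v i :=
        sum_le_sum_of_subset himage
    _ = ∏ i : Fin N, ∑ n ∈ range (β i + 1), c i ^ n := (prod_univ_sum _ _).symm
    _ ≤ ∏ i : Fin N, ∑' n, c i ^ n := prod_le_prod' fun i _ => ENNReal.sum_le_tsum _
    _ = ∏ k ∈ range N, ∑' n, c k ^ n := Fin.prod_univ_eq_prod_range (fun k => ∑' n, c k ^ n) N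

lemma tsum_finsupp_prod_pow_le {c : ℕ → ℝ≥0∞} {B : ℝ≥0∞}
    (hB : ∀ N, ∏ k ∈ range N, ∑' n, c k ^ n ≤ B) :
    ∑' α : ℕ →₀ ℕ, α.prod (fun k n => c k ^ n) ≤ B :=
  ENNReal.summable.tsum_le_of_sum_le fun s =>
    let ⟨N, hN⟩ := sum_finsupp_prod_pow_le c s
    hN.trans (hB N)

lemma Real.prod_inv_one_sub_le_exp {ι : Type*} (s : Finset ι) {x : ι → ℝ}
    (hx₀ : ∀ i, 0 ≤ x i) (hx₁ : ∀ i, x i ≤ 1 / 2) :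
    ∏ i ∈ s, (1 - x i)⁻¹ ≤ Real.exp (2 * ∑ i ∈ s, x i) := by
  have hpos : ∀ i, 0 < 1 - x i := fun i => by linarith [hx₁ i]
  calc ∏ i ∈ s, (1 - x i)⁻¹
      ≤ ∏ i ∈ s, (1 + 2 * x i) :=
        prod_le_prod (fun i _ => (inv_pos.2 (hpos i)).le) fun i _ => by
          rw [inv_le_iff_one_le_mul₀ (hpos i)]
          nlinarith [hx₀ i, hx₁ i]
    _ ≤ Real.exp (∑ i ∈ s, 2 * x i) :=
        Real.prod_one_add_le_exp_sum s fun i => by linarith [hx₀ i]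
    _ = Real.exp (2 * ∑ i ∈ s, x i) := by rw [mul_sum]

lemma inv_two_mul_succ_pow_le_half {r : ℕ} (hr : r ≠ 0) (k : ℕ) :
    ((2 * ((k : ℝ) + 1)) ^ r)⁻¹ ≤ 1 / 2 := by
  have h2 : (2 : ℝ) ≤ 2 * ((k : ℝ) + 1) := by linarith [k.cast_nonneg (α := ℝ)]
  rw [one_div]
  exact inv_anti₀ two_pos (h2.trans (le_self_pow₀ (by linarith) hr))

lemma summable_inv_two_mul_succ_pow {r : ℕ} (hr : 2 ≤ r) :
    Summable fun k : ℕ => ((2 * ((k : ℝ) + 1)) ^ r)⁻¹ := by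
  refine Summable.of_nonneg_of_le (fun k => by positivity) (fun k => ?_)
    ((summable_nat_add_iff 1).2 (Real.summable_nat_pow_inv (p := r) |>.2 (by omega)))
  push_cast
  gcongr
  linarith [k.cast_nonneg (α := ℝ)]

theorem tsum_one_div_twoNpow_pow_lt_top {r : ℕ} (hr : 2 ≤ r) :
    ∑' α : ℕ →₀ ℕ, ENNReal.ofReal (1 / twoNpow α ^ r) < ⊤ := by
  set x : ℕ → ℝ := fun k => ((2 * ((k : ℝ) + 1)) ^ r)⁻¹
  have hx₀ : ∀ k, 0 ≤ x k := fun k => by positivity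
  have hx₁ : ∀ k, x k ≤ 1 / 2 := inv_two_mul_succ_pow_le_half (by omega)
  have hgeom : ∀ k, ∑' n, ENNReal.ofReal (x k) ^ n = ENNReal.ofReal (1 - x k)⁻¹ := fun k => by
    rw [ENNReal.tsum_geometric, ENNReal.ofReal_inv_of_pos (x := 1 - x k) (by linarith [hx₁ k]),
      ENNReal.ofReal_sub _ (hx₀ k), ENNReal.ofReal_one]
  refine lt_of_le_of_lt ?_ (ENNReal.ofReal_lt_top (r := Real.exp (2 * ∑' k, x k)))
  simp_rw [ofReal_one_div_twoNpow_pow]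
  refine tsum_finsupp_prod_pow_le fun N => ?_
  refine (prod_congr rfl fun k _ => hgeom k).trans_le ?_
  rw [← ENNReal.ofReal_prod_of_nonneg fun k _ => inv_nonneg.2 (by linarith [hx₁ k])]
  refine ENNReal.ofReal_le_ofReal ((Real.prod_inv_one_sub_le_exp _ hx₀ hx₁).trans ?_)
  gcongr
  exact (summable_inv_two_mul_succ_pow hr).sum_le_tsum _ fun k _ => hx₀ k

lemma sum_antidiagonal_fst_le_tsum {A : Type*} [AddMonoid A] [IsLeftCancelAdd A]
    [HasAntidiagonal A] (u : A → ℝ≥0∞) (γ : A) : ∑ x ∈ antidiagonal γ, u x.1 ≤ ∑' α, u α := by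
  classical
  rw [← sum_image fun x hx y hy h => Prod.ext h <| add_left_cancel (a := x.1) <| by
    rw [mem_antidiagonal.1 hx, h, mem_antidiagonal.1 hy]]
  exact ENNReal.sum_le_tsum _

lemma ENNReal.tsum_mul_tsum_eq_tsum_sum_antidiagonal {A : Type*} [AddMonoid A]
    [HasAntidiagonal A] (u w : A → ℝ≥0∞) :
    (∑' α, u α) * ∑' β, w β = ∑' γ, ∑ x ∈ antidiagonal γ, u x.1 * w x.2 := by
  calc (∑' α, u α) * ∑' β, w β
      = ∑' x : A × A, u x.1 * w x.2 := by
        rw [ENNReal.tsum_prod' (f := fun x : A × A => u x.1 * w x.2), ← ENNReal.tsum_mul_right]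
        simp_rw [← ENNReal.tsum_mul_left]
    _ = ∑' σ : Σ γ : A, antidiagonal γ, u σ.2.1.1 * w σ.2.1.2 :=
        (sigmaAntidiagonalEquivProd.tsum_eq (fun x : A × A => u x.1 * w x.2)).symm
    _ = ∑' γ, ∑ x ∈ antidiagonal γ, u x.1 * w x.2 := by
        rw [ENNReal.tsum_sigma']
        exact tsum_congr fun γ => Finset.tsum_subtype (antidiagonal γ) fun x => u x.1 * w x.2

lemma norm_wick_sq_div_le {p q : ℕ} (hqp : q ≤ p) (f g : (ℕ →₀ ℕ) → ℂ) (γ : ℕ →₀ ℕ) :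
    ‖wick f g γ‖ ^ 2 / twoNpow γ ^ p
      ≤ (∑ x ∈ antidiagonal γ, 1 / twoNpow x.1 ^ (p - q))
        * ∑ x ∈ antidiagonal γ, ‖f x.1‖ ^ 2 / twoNpow x.1 ^ q * (‖g x.2‖ ^ 2 / twoNpow x.2 ^ p) := by
  have hWγ := twoNpow_pos γ
  have hnorm : ‖wick f g γ‖ ≤ ∑ x ∈ antidiagonal γ, ‖f x.1‖ * ‖g x.2‖ :=
    (norm_sum_le _ _).trans_eq (sum_congr rfl fun x _ => norm_mul _ _)
  have hterm : ∀ x ∈ antidiagonal γ, (‖f x.1‖ * ‖g x.2‖) ^ 2 = 1 / twoNpow x.1 ^ (p - q)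
      * (twoNpow γ ^ p * (‖f x.1‖ ^ 2 / twoNpow x.1 ^ q * (‖g x.2‖ ^ 2 / twoNpow x.2 ^ p))) := by
    intro x hx
    have h₁ := twoNpow_pos x.1
    have h₂ := twoNpow_pos x.2
    have hsplit : twoNpow x.1 ^ p = twoNpow x.1 ^ (p - q) * twoNpow x.1 ^ q := by
      rw [← pow_add, Nat.sub_add_cancel hqp]
    rw [← mem_antidiagonal.1 hx, twoNpow_add, mul_pow (twoNpow x.1), hsplit]
    field_simp
  have hCS := sum_sq_le_sum_mul_sum_of_sq_le_mul (antidiagonal γ)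
    (fun x _ => by have := twoNpow_pos x.1; positivity)
    (fun x _ => by have := twoNpow_pos x.1; have := twoNpow_pos x.2; positivity)
    (fun x hx => (hterm x hx).le)
  calc ‖wick f g γ‖ ^ 2 / twoNpow γ ^ p
      ≤ (∑ x ∈ antidiagonal γ, ‖f x.1‖ * ‖g x.2‖) ^ 2 / twoNpow γ ^ p := by gcongr
    _ ≤ _ := by
        rw [← mul_sum] at hCS
        rw [div_le_iff₀ (by positivity)]
        linarith

lemma ofReal_norm_wick_sq_div_le {p q : ℕ} (hqp : q ≤ p) (f g : (ℕ →₀ ℕ) → ℂ) (γ : ℕ →₀ ℕ) :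
    ENNReal.ofReal (‖wick f g γ‖ ^ 2 / twoNpow γ ^ p)
      ≤ (∑' α : ℕ →₀ ℕ, ENNReal.ofReal (1 / twoNpow α ^ (p - q)))
        * ∑ x ∈ antidiagonal γ, ENNReal.ofReal (‖f x.1‖ ^ 2 / twoNpow x.1 ^ q)
            * ENNReal.ofReal (‖g x.2‖ ^ 2 / twoNpow x.2 ^ p) := by
  have hW : ∀ α n, 0 ≤ 1 / twoNpow α ^ n := fun α n => by have := twoNpow_pos α; positivity
  have hfW : ∀ (h : (ℕ →₀ ℕ) → ℂ) α n, 0 ≤ ‖h α‖ ^ 2 / twoNpow α ^ n := fun h α n => by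
    have := twoNpow_pos α; positivity
  calc ENNReal.ofReal (‖wick f g γ‖ ^ 2 / twoNpow γ ^ p)
      ≤ ENNReal.ofReal ((∑ x ∈ antidiagonal γ, 1 / twoNpow x.1 ^ (p - q))
          * ∑ x ∈ antidiagonal γ, ‖f x.1‖ ^ 2 / twoNpow x.1 ^ q * (‖g x.2‖ ^ 2 / twoNpow x.2 ^ p)) :=
        ENNReal.ofReal_le_ofReal (norm_wick_sq_div_le hqp f g γ)
    _ = (∑ x ∈ antidiagonal γ, ENNReal.ofReal (1 / twoNpow x.1 ^ (p - q)))
          * ∑ x ∈ antidiagonal γ, ENNReal.ofReal (‖f x.1‖ ^ 2 / twoNpow x.1 ^ q)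
            * ENNReal.ofReal (‖g x.2‖ ^ 2 / twoNpow x.2 ^ p) := by
        rw [ENNReal.ofReal_mul (sum_nonneg fun x _ => hW _ _),
          ENNReal.ofReal_sum_of_nonneg fun x _ => hW _ _,
          ENNReal.ofReal_sum_of_nonneg fun x _ => mul_nonneg (hfW _ _ _) (hfW _ _ _)]
        simp_rw [ENNReal.ofReal_mul (hfW _ _ _)]
    _ ≤ _ := by
        gcongr
        exact sum_antidiagonal_fst_le_tsum (fun α => ENNReal.ofReal (1 / twoNpow α ^ (p - q))) γ

theorem kondratiev_vage_inequality_general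
    (p q : ℕ) (hpq : q + 2 ≤ p) (f g : (ℕ →₀ ℕ) → ℂ) :
    (∑' α : ℕ →₀ ℕ, ENNReal.ofReal (1 / (twoNpow α) ^ (p - q))) < ⊤ ∧
    (∑' γ : ℕ →₀ ℕ, ENNReal.ofReal (‖wick f g γ‖ ^ 2 / (twoNpow γ) ^ p))
      ≤ (∑' α : ℕ →₀ ℕ, ENNReal.ofReal (1 / (twoNpow α) ^ (p - q)))
          * (∑' α : ℕ →₀ ℕ, ENNReal.ofReal (‖f α‖ ^ 2 / (twoNpow α) ^ q))
          * (∑' β : ℕ →₀ ℕ, ENNReal.ofReal (‖g β‖ ^ 2 / (twoNpow β) ^ p)) := by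
  refine ⟨tsum_one_div_twoNpow_pow_lt_top (by omega), ?_⟩
  calc ∑' γ : ℕ →₀ ℕ, ENNReal.ofReal (‖wick f g γ‖ ^ 2 / twoNpow γ ^ p)
      ≤ ∑' γ : ℕ →₀ ℕ, (∑' α : ℕ →₀ ℕ, ENNReal.ofReal (1 / twoNpow α ^ (p - q)))
          * ∑ x ∈ antidiagonal γ, ENNReal.ofReal (‖f x.1‖ ^ 2 / twoNpow x.1 ^ q)
            * ENNReal.ofReal (‖g x.2‖ ^ 2 / twoNpow x.2 ^ p) :=
        ENNReal.tsum_le_tsum fun γ => ofReal_norm_wick_sq_div_le (by omega) f g γ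
    _ = _ := by
        rw [ENNReal.tsum_mul_left, ← ENNReal.tsum_mul_tsum_eq_tsum_sum_antidiagonal
          (fun α => ENNReal.ofReal (‖f α‖ ^ 2 / twoNpow α ^ q))
          (fun β => ENNReal.ofReal (‖g β‖ ^ 2 / twoNpow β ^ p)), mul_assoc]

/-- (Våge's inequality for the Kondratiev space of stochastic distributions.)
For `p ≥ q + 2`, `S = ∑_α (2ℕ)^{-(p-q)α} < ∞`, and the Wick product satisfies
`‖f ⋄ g‖_p² ≤ S ⬝ ‖f‖_q² ⬝ ‖g‖_p²`. -/
theorem kondratiev_vage_inequality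
    (p q : ℕ) (hpq : q + 2 ≤ p) (f g : (ℕ →₀ ℕ) → ℂ)
    (hf : (∑' α : ℕ →₀ ℕ, ENNReal.ofReal (‖f α‖ ^ 2 / (twoNpow α) ^ q)) < ⊤)
    (hg : (∑' β : ℕ →₀ ℕ, ENNReal.ofReal (‖g β‖ ^ 2 / (twoNpow β) ^ p)) < ⊤) :
    (∑' α : ℕ →₀ ℕ, ENNReal.ofReal (1 / (twoNpow α) ^ (p - q))) < ⊤ ∧
    (∑' γ : ℕ →₀ ℕ, ENNReal.ofReal (‖wick f g γ‖ ^ 2 / (twoNpow γ) ^ p))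
      ≤ (∑' α : ℕ →₀ ℕ, ENNReal.ofReal (1 / (twoNpow α) ^ (p - q)))
          * (∑' α : ℕ →₀ ℕ, ENNReal.ofReal (‖f α‖ ^ 2 / (twoNpow α) ^ q))
          * (∑' β : ℕ →₀ ℕ, ENNReal.ofReal (‖g β‖ ^ 2 / (twoNpow β) ^ p)) :=
  kondratiev_vage_inequality_general p q hpq f g
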